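/- Let A, N_1, …, N_m ∈ ℝ^{n×n}, let u = (u_1,…,u_m)^⊤ be a continuous control, let Φ be the fundamental solution of the bilinear system, let K ∈ ℝ^{n×n} be symmetric positive semidefinite and γ > 0. Then for all 0 ≤ s ≤ t, Φ(t,s) K Φ(t,s)^⊤ ≤ exp{∫_s^t ‖γ u⁰(v)‖₂² dv} · Z_γ(t−s, K) in the positive semidefinite order, where Z_γ(·,K) solves the generalized Lyapunov matrix differential equation with initial value K. -/

import Mathlib

open MeasureTheory Matrix
open scoped Classical

set_option linter.unusedVariables false

attribute [local instance] Matrix.normedAddCommGroup Matrix.normedSpace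

/-!
Put `β(r) = exp (-∫ₛʳ ‖γ u⁰‖²)`, `P(r) = Φ(r,s) K Φ(r,s)ᵀ` and `L X = A X + X Aᵀ + γ⁻² ∑ₖ Nₖ X Nₖᵀ`.
Completing the square with `Cₖ = γ u⁰ₖ I - γ⁻¹ Nₖ` shows that `D(r) = Z(r - s) - β(r) P(r)` solves
`D' = L D + β ∑ₖ Cₖ P Cₖᵀ` with `D(s) = 0`, so `D` is driven by a positive semidefinite forcing
term.
Conjugating by `exp (-r A)` removes the drift `A X + X Aᵀ`, leaving an equation
`C' = ∑ₖ Mₖ C Mₖᵀ + G` with `G ≥ 0`. For such an equation the size `ψ(r)` of the negative part of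
`C(r)`, measured as the largest value of `-xᵀ C(r) x` on the unit ball, satisfies `ψ ≤ B ∫ₛ ψ`,
so `ψ = 0` by Grönwall's inequality and `C` stays positive semidefinite.
-/

open Set

section Calculus

variable {n : Type*} [Fintype n]

/- `HasDerivAt` only sees the topology, which the entrywise norm shares with the operator norm
`linftyOpNormedRing` that makes matrices a normed algebra. -/
theorem HasDerivAt.matrix_mul {f g : ℝ → Matrix n n ℝ} {f' g' : Matrix n n ℝ} {t : ℝ}
    (hf : HasDerivAt f f' t) (hg : HasDerivAt g g' t) :
    HasDerivAt (fun τ => f τ * g τ) (f' * g t + f t * g') t := by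
  let _ := Matrix.linftyOpNormedRing (n := n) (α := ℝ)
  let _ := Matrix.linftyOpNormedAlgebra (n := n) (R := ℝ) (α := ℝ)
  exact hf.fun_mul hg

theorem HasDerivAt.matrix_transpose {f : ℝ → Matrix n n ℝ} {f' : Matrix n n ℝ} {t : ℝ}
    (hf : HasDerivAt f f' t) : HasDerivAt (fun τ => (f τ)ᵀ) f'ᵀ t :=
  (transposeLinearEquiv n n ℝ ℝ).toLinearMap.toContinuousLinearMap.hasFDerivAt.comp_hasDerivAt t hf

theorem HasDerivAt.dotProduct_mulVec {f : ℝ → Matrix n n ℝ} {f' : Matrix n n ℝ} {t : ℝ}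
    (hf : HasDerivAt f f' t) (x : n → ℝ) :
    HasDerivAt (fun τ => x ⬝ᵥ (f τ *ᵥ x)) (x ⬝ᵥ (f' *ᵥ x)) t := by
  let q : Matrix n n ℝ →ₗ[ℝ] ℝ :=
    { toFun := fun M => x ⬝ᵥ (M *ᵥ x)
      map_add' := by simp [add_mulVec, dotProduct_add]
      map_smul' := by simp [smul_mulVec, dotProduct_smul] }
  exact q.toContinuousLinearMap.hasFDerivAt.comp_hasDerivAt t hf

theorem HasDerivAt.mul_mul_transpose {Φ : ℝ → Matrix n n ℝ} {B : Matrix n n ℝ} {r : ℝ}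
    (hΦ : HasDerivAt Φ (B * Φ r) r) (K : Matrix n n ℝ) :
    HasDerivAt (fun τ => Φ τ * K * (Φ τ)ᵀ)
      (B * (Φ r * K * (Φ r)ᵀ) + Φ r * K * (Φ r)ᵀ * Bᵀ) r := by
  convert (hΦ.matrix_mul (hasDerivAt_const r K)).matrix_mul hΦ.matrix_transpose using 1
  simp only [Matrix.mul_zero, add_zero, transpose_mul, Matrix.mul_assoc]

theorem Matrix.hasDerivAt_exp_smul [DecidableEq n] (A : Matrix n n ℝ) (t : ℝ) :
    HasDerivAt (fun r : ℝ => NormedSpace.exp (r • A)) (NormedSpace.exp (t • A) * A) t := by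
  let _ := Matrix.linftyOpNormedRing (n := n) (α := ℝ)
  let _ := Matrix.linftyOpNormedAlgebra (n := n) (R := ℝ) (α := ℝ)
  have : @CompleteSpace (Matrix n n ℝ)
      (Matrix.linftyOpNormedRing (n := n) (α := ℝ)).toUniformSpace :=
    FiniteDimensional.complete ℝ _
  exact hasDerivAt_exp_smul_const A t

end Calculus

theorem eq_zero_of_le_mul_intervalIntegral {f : ℝ → ℝ} {K s t : ℝ} (hst : s ≤ t)
    (hf : ContinuousOn f (Icc s t)) (hf₀ : ∀ τ ∈ Icc s t, 0 ≤ f τ)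
    (hle : ∀ τ ∈ Icc s t, f τ ≤ K * ∫ r in s..τ, f r) : ∀ τ ∈ Icc s t, f τ = 0 := by
  have hint : ∀ τ ∈ Icc s t, 0 ≤ ∫ r in s..τ, f r := fun τ hτ =>
    intervalIntegral.integral_nonneg hτ.1 fun r hr => hf₀ r ⟨hr.1, hr.2.trans hτ.2⟩
  have hprim : ∀ τ ∈ Icc s t, ∫ r in s..τ, f r = 0 := by
    refine eq_zero_of_abs_deriv_le_mul_abs_self_of_eq_zero_right (f' := f) (K := K) ?_ ?_
      (by simp) ?_
    · rw [← uIcc_of_le hst] at hf ⊢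
      exact intervalIntegral.continuousOn_primitive_interval hf.integrableOn_uIcc
    · intro τ hτ
      exact intervalIntegral.integral_hasDerivWithinAt_right (t := Ioi τ)
        ((hf.mono (Icc_subset_Icc_right hτ.2.le)).intervalIntegrable_of_Icc hτ.1)
        ⟨Icc s t, Icc_mem_nhdsGT_of_mem hτ, hf.aestronglyMeasurable measurableSet_Icc⟩
        ((hf τ (Ico_subset_Icc_self hτ)).mono_of_mem_nhdsWithin (Icc_mem_nhdsGT_of_mem hτ))
    · intro τ hτ
      rw [Real.norm_of_nonneg (hf₀ τ (Ico_subset_Icc_self hτ)),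
        Real.norm_of_nonneg (hint τ (Ico_subset_Icc_self hτ))]
      exact hle τ (Ico_subset_Icc_self hτ)
  intro τ hτ
  exact le_antisymm (by simpa [hprim τ hτ] using hle τ hτ) (hf₀ τ hτ)

namespace Matrix

variable {n ι : Type*} [Fintype n] [Fintype ι]

theorem dotProduct_mul_mul_transpose_mulVec {m : Type*} [Fintype m] (B : Matrix m n ℝ)
    (M : Matrix n n ℝ) (x : m → ℝ) :
    x ⬝ᵥ ((B * M * Bᵀ) *ᵥ x) = (Bᵀ *ᵥ x) ⬝ᵥ (M *ᵥ (Bᵀ *ᵥ x)) := by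
  rw [← mulVec_mulVec, ← mulVec_mulVec, dotProduct_mulVec x B, ← mulVec_transpose]

theorem PosSemidef.mul_mul_transpose_same {m : Type*} [Fintype m] {G : Matrix n n ℝ}
    (hG : G.PosSemidef) (B : Matrix m n ℝ) : (B * G * Bᵀ).PosSemidef := by
  simpa [conjTranspose_eq_transpose_of_trivial] using hG.mul_mul_conjTranspose_same B

noncomputable def negQuadSup (M : Matrix n n ℝ) : ℝ :=
  sSup ((fun x => -(x ⬝ᵥ (M *ᵥ x))) '' Metric.closedBall 0 1)

theorem continuous_negQuadSup : Continuous (negQuadSup (n := n)) :=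
  (isCompact_closedBall _ _).continuous_sSup
    (continuous_snd.dotProduct (continuous_fst.matrix_mulVec continuous_snd)).neg

theorem neg_dotProduct_mulVec_le_negQuadSup (M : Matrix n n ℝ) {x : n → ℝ}
    (hx : x ∈ Metric.closedBall 0 1) : -(x ⬝ᵥ (M *ᵥ x)) ≤ negQuadSup M :=
  le_csSup ((isCompact_closedBall _ _).bddAbove_image
    (continuous_id.dotProduct (continuous_const.matrix_mulVec continuous_id)).neg.continuousOn)
    (mem_image_of_mem _ hx)

theorem negQuadSup_le {M : Matrix n n ℝ} {c : ℝ}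
    (h : ∀ x ∈ Metric.closedBall 0 1, -(x ⬝ᵥ (M *ᵥ x)) ≤ c) : negQuadSup M ≤ c :=
  csSup_le ((Metric.nonempty_closedBall.2 zero_le_one).image _) (forall_mem_image.2 h)

theorem negQuadSup_nonneg (M : Matrix n n ℝ) : 0 ≤ negQuadSup M := by
  simpa using neg_dotProduct_mulVec_le_negQuadSup M (Metric.mem_closedBall_self zero_le_one)

theorem neg_dotProduct_mulVec_le_sq_norm_mul_negQuadSup (M : Matrix n n ℝ) (x : n → ℝ) :
    -(x ⬝ᵥ (M *ᵥ x)) ≤ ‖x‖ ^ 2 * negQuadSup M := by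
  rcases eq_or_ne x 0 with rfl | hx
  · simp
  have hx' : 0 < ‖x‖ := norm_pos_iff.2 hx
  have hunit : ‖x‖⁻¹ • x ∈ Metric.closedBall (0 : n → ℝ) 1 := by
    simp [norm_smul, hx'.ne']
  have := neg_dotProduct_mulVec_le_negQuadSup M hunit
  simp only [mulVec_smul, dotProduct_smul, smul_dotProduct, smul_eq_mul] at this
  calc -(x ⬝ᵥ (M *ᵥ x)) = ‖x‖ ^ 2 * -(‖x‖⁻¹ * (‖x‖⁻¹ * (x ⬝ᵥ (M *ᵥ x)))) := by
        field_simp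
    _ ≤ ‖x‖ ^ 2 * negQuadSup M := by gcongr

theorem dotProduct_mulVec_nonneg_of_negQuadSup_nonpos {M : Matrix n n ℝ}
    (h : negQuadSup M ≤ 0) (x : n → ℝ) : 0 ≤ x ⬝ᵥ (M *ᵥ x) := by
  have := neg_dotProduct_mulVec_le_sq_norm_mul_negQuadSup M x
  nlinarith [sq_nonneg ‖x‖]

theorem exists_sum_sq_norm_mulVec_le {M : ι → ℝ → Matrix n n ℝ} {S : Set ℝ} (hS : IsCompact S)
    (hM : ∀ k, ContinuousOn (M k) S) :
    ∃ B : ℝ, ∀ r ∈ S, ∀ y ∈ Metric.closedBall (0 : n → ℝ) 1, ∑ k, ‖M k r *ᵥ y‖ ^ 2 ≤ B := by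
  have hF : Continuous fun q : Matrix n n ℝ × (n → ℝ) => ‖q.1 *ᵥ q.2‖ ^ 2 :=
    (continuous_fst.matrix_mulVec continuous_snd).norm.pow 2
  have hcont : ContinuousOn (fun p : ℝ × (n → ℝ) => ∑ k, ‖M k p.1 *ᵥ p.2‖ ^ 2)
      (S ×ˢ Metric.closedBall 0 1) := by
    refine continuousOn_finsetSum _ fun k _ => ?_
    have hMk : ContinuousOn (fun p : ℝ × (n → ℝ) => (M k p.1, p.2))
        (S ×ˢ Metric.closedBall 0 1) :=
      ((hM k).comp continuous_fst.continuousOn fun p hp => (mem_prod.1 hp).1).prodMk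
        continuous_snd.continuousOn
    exact (hF.comp_continuousOn hMk :)
  obtain ⟨B, hB⟩ := (hS.prod (isCompact_closedBall _ _)).bddAbove_image hcont
  exact ⟨B, fun r hr y hy => (hB (mem_image_of_mem _ (mk_mem_prod hr hy)) :)⟩

theorem neg_dotProduct_sum_conj_add_mulVec_le {M : ι → Matrix n n ℝ} {C G : Matrix n n ℝ}
    (hG : G.PosSemidef) (x : n → ℝ) :
    -(x ⬝ᵥ ((∑ k, M k * C * (M k)ᵀ + G) *ᵥ x)) ≤
      (∑ k, ‖(M k)ᵀ *ᵥ x‖ ^ 2) * negQuadSup C := by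
  have hGx : 0 ≤ x ⬝ᵥ (G *ᵥ x) := by simpa using hG.dotProduct_mulVec_nonneg x
  have hsum : ∀ k, -((M k)ᵀ *ᵥ x ⬝ᵥ (C *ᵥ ((M k)ᵀ *ᵥ x))) ≤
      ‖(M k)ᵀ *ᵥ x‖ ^ 2 * negQuadSup C := fun k =>
    neg_dotProduct_mulVec_le_sq_norm_mul_negQuadSup C _
  simp only [add_mulVec, dotProduct_add, sum_mulVec, dotProduct_sum,
    dotProduct_mul_mul_transpose_mulVec, Finset.sum_mul]
  linarith [Finset.sum_le_sum fun k (_ : k ∈ Finset.univ) => hsum k,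
    Finset.sum_neg_distrib (s := Finset.univ)
      (f := fun k => (M k)ᵀ *ᵥ x ⬝ᵥ (C *ᵥ ((M k)ᵀ *ᵥ x)))]

theorem dotProduct_mulVec_nonneg_of_hasDerivAt_sum_conj_add {C G : ℝ → Matrix n n ℝ}
    {M : ι → ℝ → Matrix n n ℝ} {s t : ℝ} (hst : s ≤ t)
    (hC : ∀ r ∈ Icc s t, HasDerivAt C (∑ k, M k r * C r * (M k r)ᵀ + G r) r)
    (hM : ∀ k, ContinuousOn (M k) (Icc s t)) (hG : ∀ r ∈ Icc s t, (G r).PosSemidef)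
    (hCs : (C s).PosSemidef) (x : n → ℝ) : 0 ≤ x ⬝ᵥ (C t *ᵥ x) := by
  let ψ : ℝ → ℝ := fun r => negQuadSup (C r)
  have hψ : ContinuousOn ψ (Icc s t) := continuous_negQuadSup.comp_continuousOn
    fun r hr => (hC r hr).continuousAt.continuousWithinAt
  obtain ⟨B, hB⟩ := exists_sum_sq_norm_mulVec_le isCompact_Icc
    fun k => continuous_id.matrix_transpose.comp_continuousOn (hM k)
  have hgrowth : ∀ τ ∈ Icc s t, ψ τ ≤ B * ∫ r in s..τ, ψ r := by
    intro τ hτ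
    refine negQuadSup_le fun y hy => ?_
    have hsub : Icc s τ ⊆ Icc s t := Icc_subset_Icc_right hτ.2
    have hy₀ : 0 ≤ y ⬝ᵥ (C s *ᵥ y) := by simpa using hCs.dotProduct_mulVec_nonneg y
    have hFTC := intervalIntegral.sub_le_integral_of_hasDeriv_right_of_le hτ.1
      (g := fun r => -(y ⬝ᵥ (C r *ᵥ y))) (φ := fun r => B * ψ r)
      (fun r hr => ((hC r (hsub hr)).dotProduct_mulVec y).neg.continuousAt.continuousWithinAt)
      (fun r hr =>
        ((hC r (hsub (Ioo_subset_Icc_self hr))).dotProduct_mulVec y).neg.hasDerivWithinAt)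
      ((hψ.mono hsub).integrableOn_Icc.const_mul B)
      (fun r hr => (neg_dotProduct_sum_conj_add_mulVec_le
          (hG r (hsub (Ioo_subset_Icc_self hr))) y).trans
        (mul_le_mul_of_nonneg_right (hB r (hsub (Ioo_subset_Icc_self hr)) y hy)
          (negQuadSup_nonneg _)))
    rw [intervalIntegral.integral_const_mul] at hFTC
    linarith
  have hψt := eq_zero_of_le_mul_intervalIntegral hst hψ (fun r _ => negQuadSup_nonneg _) hgrowth
    t ⟨hst, le_rfl⟩
  exact dotProduct_mulVec_nonneg_of_negQuadSup_nonpos hψt.le x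

section Lyapunov

variable {R : Type*} [CommSemiring R]

def lyapunovOp (A : Matrix n n R) (N : ι → Matrix n n R) : Matrix n n R →ₗ[R] Matrix n n R where
  toFun X := A * X + X * Aᵀ + ∑ k, N k * X * (N k)ᵀ
  map_add' X Y := by
    simp only [Matrix.mul_add, Matrix.add_mul, Finset.sum_add_distrib]
    abel
  map_smul' c X := by
    simp only [Matrix.mul_smul, Matrix.smul_mul, smul_add, Finset.smul_sum, RingHom.id_apply]

theorem lyapunovOp_apply (A : Matrix n n R) (N : ι → Matrix n n R) (X : Matrix n n R) :
    lyapunovOp A N X = A * X + X * Aᵀ + ∑ k, N k * X * (N k)ᵀ :=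
  rfl

theorem lyapunovOp_transpose (A : Matrix n n R) (N : ι → Matrix n n R) (X : Matrix n n R) :
    lyapunovOp A N Xᵀ = (lyapunovOp A N X)ᵀ := by
  simp only [lyapunovOp_apply, transpose_add, transpose_sum, transpose_mul, transpose_transpose,
    Matrix.mul_assoc]
  abel

theorem lyapunovOp_smul_apply (A : Matrix n n R) (N : ι → Matrix n n R) (c : R)
    (X : Matrix n n R) :
    lyapunovOp A (fun k => c • N k) X = A * X + X * Aᵀ + c ^ 2 • ∑ k, N k * X * (N k)ᵀ := by
  simp only [lyapunovOp_apply, transpose_smul, smul_mul_assoc, mul_smul_comm, smul_smul,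
    Finset.smul_sum, sq]

end Lyapunov

theorem transpose_eq_of_hasDerivAt_lyapunovOp {A : Matrix n n ℝ} {N : ι → Matrix n n ℝ}
    {Z : ℝ → Matrix n n ℝ} {a b : ℝ} (hab : a ≤ b)
    (hZ : ∀ r ∈ Icc a b, HasDerivAt Z (lyapunovOp A N (Z r)) r) (ha : (Z a)ᵀ = Z a) :
    (Z b)ᵀ = Z b := by
  have hZT : ∀ r ∈ Icc a b, HasDerivAt (fun τ => (Z τ)ᵀ) (lyapunovOp A N (Z r)ᵀ) r :=
    fun r hr => by simpa only [lyapunovOp_transpose] using (hZ r hr).matrix_transpose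
  exact ODE_solution_unique (v := fun _ => lyapunovOp A N)
    (fun _ => (lyapunovOp A N).toContinuousLinearMap.lipschitz)
    (fun r hr => (hZT r hr).continuousAt.continuousWithinAt)
    (fun r hr => (hZT r (Ico_subset_Icc_self hr)).hasDerivWithinAt)
    (fun r hr => (hZ r hr).continuousAt.continuousWithinAt)
    (fun r hr => (hZ r (Ico_subset_Icc_self hr)).hasDerivWithinAt) ha ⟨hab, le_rfl⟩

variable [DecidableEq n]

theorem conj_conj_eq_of_mul_eq_one {X Y : Matrix n n ℝ} (hYX : Y * X = 1) (N D : Matrix n n ℝ) :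
    X * N * Y * (X * D * Xᵀ) * (X * N * Y)ᵀ = X * (N * D * Nᵀ) * Xᵀ := by
  have hXY : Xᵀ * Yᵀ = 1 := by rw [← transpose_mul, hYX, transpose_one]
  simp only [transpose_mul, Matrix.mul_assoc]
  rw [← Matrix.mul_assoc Y X, hYX, Matrix.one_mul, ← Matrix.mul_assoc Xᵀ Yᵀ, hXY, Matrix.one_mul]

theorem dotProduct_mulVec_nonneg_of_hasDerivAt_lyapunovOp {A : Matrix n n ℝ}
    {N : ι → Matrix n n ℝ} {D G : ℝ → Matrix n n ℝ} {s t : ℝ} (hst : s ≤ t)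
    (hD : ∀ r ∈ Icc s t, HasDerivAt D (lyapunovOp A N (D r) + G r) r)
    (hG : ∀ r ∈ Icc s t, (G r).PosSemidef) (hDs : (D s).PosSemidef) (x : n → ℝ) :
    0 ≤ x ⬝ᵥ (D t *ᵥ x) := by
  let X : ℝ → Matrix n n ℝ := fun r => NormedSpace.exp (r • -A)
  let Y : ℝ → Matrix n n ℝ := fun r => NormedSpace.exp (r • A)
  have hYX : ∀ r, Y r * X r = 1 := fun r => by
    rw [← exp_add_of_commute _ _ ((Commute.refl A).smul_left r |>.neg_right.smul_right r)]
    simp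
  have hX : ∀ r, HasDerivAt X (X r * -A) r := hasDerivAt_exp_smul (-A)
  have hC : ∀ r ∈ Icc s t, HasDerivAt (fun τ => X τ * D τ * (X τ)ᵀ)
      (∑ k, X r * N k * Y r * (X r * D r * (X r)ᵀ) * (X r * N k * Y r)ᵀ
        + X r * G r * (X r)ᵀ) r := by
    intro r hr
    convert ((hX r).matrix_mul (hD r hr)).matrix_mul (hX r).matrix_transpose using 1
    rw [Finset.sum_congr rfl fun k _ => conj_conj_eq_of_mul_eq_one (hYX r) (N k) (D r)]
    simp only [lyapunovOp_apply, Matrix.mul_add, Matrix.add_mul, Finset.mul_sum, Finset.sum_mul,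
      transpose_mul, transpose_neg, Matrix.mul_neg, Matrix.neg_mul, Matrix.mul_assoc]
    abel
  have hXc : Continuous X := continuous_iff_continuousAt.2 fun r => (hX r).continuousAt
  have hYc : Continuous Y :=
    continuous_iff_continuousAt.2 fun r => (hasDerivAt_exp_smul A r).continuousAt
  have hCt := dotProduct_mulVec_nonneg_of_hasDerivAt_sum_conj_add hst hC
    (fun k => ((hXc.matrix_mul continuous_const).matrix_mul hYc).continuousOn)
    (fun r hr => (hG r hr).mul_mul_transpose_same (X r)) (hDs.mul_mul_transpose_same (X s))
    ((Y t)ᵀ *ᵥ x)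
  have hDt : D t = Y t * (X t * D t * (X t)ᵀ) * (Y t)ᵀ := by
    simp only [← Matrix.mul_assoc, hYX, Matrix.one_mul]
    rw [Matrix.mul_assoc, ← transpose_mul, hYX, transpose_one, Matrix.mul_one]
  rwa [hDt, dotProduct_mul_mul_transpose_mulVec]

theorem sum_mul_mul_transpose_smul_one_sub_smul {γ : ℝ} (hγ : γ ≠ 0) (A : Matrix n n ℝ)
    (N : ι → Matrix n n ℝ) (w : ι → ℝ) (P : Matrix n n ℝ) :
    ∑ k, ((γ * w k) • 1 - γ⁻¹ • N k) * P * ((γ * w k) • 1 - γ⁻¹ • N k)ᵀ =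
      lyapunovOp A (fun k => γ⁻¹ • N k) P + (∑ k, (γ * w k) ^ 2) • P -
        ((A + ∑ k, w k • N k) * P + P * (A + ∑ k, w k • N k)ᵀ) := by
  have hk : ∀ k, ((γ * w k) • 1 - γ⁻¹ • N k) * P * ((γ * w k) • 1 - γ⁻¹ • N k)ᵀ =
      (γ * w k) ^ 2 • P - w k • (N k * P + P * (N k)ᵀ) + γ⁻¹ • N k * P * (γ⁻¹ • N k)ᵀ :=
    fun k => by
      simp only [transpose_sub, transpose_smul, transpose_one, Matrix.sub_mul, Matrix.mul_sub,
        smul_mul_assoc, mul_smul_comm, Matrix.one_mul, Matrix.mul_one, smul_smul, smul_add]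
      match_scalars <;> field_simp
  rw [Finset.sum_congr rfl fun k _ => hk k]
  simp only [lyapunovOp_apply, Finset.sum_add_distrib, Finset.sum_sub_distrib, Finset.sum_smul,
    Matrix.add_mul, Matrix.mul_add, transpose_add, transpose_sum, transpose_smul, Finset.sum_mul,
    Finset.mul_sum, smul_mul_assoc, mul_smul_comm, smul_add]
  abel

theorem hasDerivAt_sub_smul_mul_mul_transpose {γ : ℝ} (hγ : γ ≠ 0) {A K : Matrix n n ℝ}
    {N : ι → Matrix n n ℝ} {w : ι → ℝ} {Z Φ : ℝ → Matrix n n ℝ} {β : ℝ → ℝ} {r : ℝ}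
    (hZ : HasDerivAt Z (lyapunovOp A (fun k => γ⁻¹ • N k) (Z r)) r)
    (hΦ : HasDerivAt Φ ((A + ∑ k, w k • N k) * Φ r) r)
    (hβ : HasDerivAt β (β r * -∑ k, (γ * w k) ^ 2) r) :
    HasDerivAt (fun τ => Z τ - β τ • (Φ τ * K * (Φ τ)ᵀ))
      (lyapunovOp A (fun k => γ⁻¹ • N k) (Z r - β r • (Φ r * K * (Φ r)ᵀ)) +
        β r • ∑ k, ((γ * w k) • 1 - γ⁻¹ • N k) * (Φ r * K * (Φ r)ᵀ) *
          ((γ * w k) • 1 - γ⁻¹ • N k)ᵀ) r := by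
  refine (hZ.sub (hβ.smul (hΦ.mul_mul_transpose K))).congr_deriv ?_
  rw [sum_mul_mul_transpose_smul_one_sub_smul hγ A, map_sub, map_smul]
  module

theorem posSemidef_exp_integral_smul_sub_conj {γ : ℝ} (hγ : γ ≠ 0) {A K : Matrix n n ℝ}
    {N : ι → Matrix n n ℝ} {w : ℝ → ι → ℝ} (hw : Continuous w) {Z Φ : ℝ → Matrix n n ℝ}
    {s t : ℝ} (hst : s ≤ t) (hK : K.PosSemidef) (hZs : Z s = K)
    (hZ : ∀ r ∈ Icc s t, HasDerivAt Z (lyapunovOp A (fun k => γ⁻¹ • N k) (Z r)) r)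
    (hΦs : Φ s = 1) (hΦ : ∀ r ∈ Icc s t, HasDerivAt Φ ((A + ∑ k, w r k • N k) * Φ r) r) :
    (Real.exp (∫ v in s..t, ∑ k, (γ * w v k) ^ 2) • Z t - Φ t * K * (Φ t)ᵀ).PosSemidef := by
  set g : ℝ → ℝ := fun v => ∑ k, (γ * w v k) ^ 2
  have hg : Continuous g := by fun_prop
  set β : ℝ → ℝ := fun r => Real.exp (-∫ v in s..r, g v)
  set D : ℝ → Matrix n n ℝ := fun r => Z r - β r • (Φ r * K * (Φ r)ᵀ)
  have hD : ∀ r ∈ Icc s t, HasDerivAt D (lyapunovOp A (fun k => γ⁻¹ • N k) (D r) +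
      β r • ∑ k, ((γ * w r k) • 1 - γ⁻¹ • N k) * (Φ r * K * (Φ r)ᵀ) *
        ((γ * w r k) • 1 - γ⁻¹ • N k)ᵀ) r := fun r hr =>
    hasDerivAt_sub_smul_mul_mul_transpose hγ (hZ r hr) (hΦ r hr)
      (hg.integral_hasStrictDerivAt s r).hasDerivAt.neg.exp
  have hG : ∀ r ∈ Icc s t, (β r • ∑ k, ((γ * w r k) • 1 - γ⁻¹ • N k) * (Φ r * K * (Φ r)ᵀ) *
      ((γ * w r k) • 1 - γ⁻¹ • N k)ᵀ).PosSemidef := fun r _ =>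
    (posSemidef_sum _ fun k _ => ((hK.mul_mul_transpose_same _).mul_mul_transpose_same _)).smul
      (Real.exp_pos _).le
  have hDs : (D s).PosSemidef := by simp [D, β, hΦs, hZs, PosSemidef.zero]
  have hKT : Kᵀ = K := by simpa [conjTranspose_eq_transpose_of_trivial] using hK.1.eq
  have hZT : (Z t)ᵀ = Z t := transpose_eq_of_hasDerivAt_lyapunovOp hst hZ (by rw [hZs, hKT])
  have hDt : (D t).PosSemidef := by
    refine .of_dotProduct_mulVec_nonneg ?_ fun x => ?_
    · simp [IsHermitian, conjTranspose_eq_transpose_of_trivial, D, hZT, hKT, transpose_mul,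
        Matrix.mul_assoc]
    · simpa using dotProduct_mulVec_nonneg_of_hasDerivAt_lyapunovOp hst hD hG hDs x
  have hexp : Real.exp (∫ v in s..t, g v) • Z t - Φ t * K * (Φ t)ᵀ =
      Real.exp (∫ v in s..t, g v) • D t := by
    simp [D, β, smul_sub, smul_smul, ← Real.exp_add]
  rw [hexp]
  exact hDt.smul (Real.exp_pos _).le

end Matrix

theorem fundamental_solution_estimate
    {n m : ℕ}
    (A : Matrix (Fin n) (Fin n) ℝ) (N : Fin m → Matrix (Fin n) (Fin n) ℝ)
    (u : ℝ → Fin m → ℝ) (hu : Continuous u)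
    (γ : ℝ) (hγ : 0 < γ)
    (Φ : ℝ → ℝ → Matrix (Fin n) (Fin n) ℝ)
    (hΦinit : ∀ s, 0 ≤ s → Φ s s = 1)
    (hΦode : ∀ s, 0 ≤ s → ∀ t, s ≤ t →
      HasDerivAt (fun τ => Φ τ s) (A * Φ t s + ∑ k, u t k • (N k * Φ t s)) t)
    (K : Matrix (Fin n) (Fin n) ℝ) (hK : K.PosSemidef)
    -- `Z = Z_γ(·, K)` solves the generalized Lyapunov matrix ODE with initial value `K`
    (Z : ℝ → Matrix (Fin n) (Fin n) ℝ)
    (hZ0 : Z 0 = K)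
    (hZode : ∀ τ, 0 ≤ τ →
      HasDerivAt Z (A * Z τ + Z τ * Aᵀ + (γ ^ 2)⁻¹ • ∑ k, N k * Z τ * (N k)ᵀ) τ)
    (s t : ℝ) (hs : 0 ≤ s) (hst : s ≤ t) :
    (Real.exp (∫ v in s..t, ∑ k, (γ * (if N k = 0 then (0 : ℝ) else u v k)) ^ 2) • Z (t - s)
      - Φ t s * K * (Φ t s)ᵀ).PosSemidef := by
  set w : ℝ → Fin m → ℝ := fun v k => if N k = 0 then 0 else u v k
  have hw : Continuous w := continuous_pi fun k => by
    by_cases h : N k = 0 <;> simp only [w, h, if_true, if_false] <;> fun_prop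
  have hZ : ∀ τ, 0 ≤ τ → HasDerivAt Z (lyapunovOp A (fun k => γ⁻¹ • N k) (Z τ)) τ := by
    simpa only [lyapunovOp_smul_apply, inv_pow] using hZode
  refine posSemidef_exp_integral_smul_sub_conj (Z := fun r => Z (r - s)) (Φ := fun r => Φ r s)
    hγ.ne' hw hst hK (by simp [hZ0])
    (fun r hr => (hZ (r - s) (sub_nonneg.2 hr.1)).comp_sub_const r s) (hΦinit s hs) fun r hr => (hΦode s hs r hr.1).congr_deriv ?_
  rw [Matrix.add_mul, Finset.sum_mul]
  congr 1
  refine Finset.sum_congr rfl fun k _ => ?_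
  by_cases h : N k = 0 <;> simp [w, h]
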